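/- Let C and D be categories with finite products and L ⊣ R: D ⇄ C an adjunction satisfying Frobenius reciprocity. Then for any object S of C, the adjunction extends contravariantly to an adjunction between the full subcategory of presheaves on D of the form (RS)^W and the full subcategory of presheaves on C of the form S^X, with unit given by S^ε and counit by R S^η, where η and ε are the unit and counit of L ⊣ R. -/

import Mathlib

/-! Precomposition with `L` and `R` is an adjunction `L^* ⊣ R^*` of presheaf categories (the
whiskering of `adj.op`). Frobenius reciprocity makes the transposition
`C(X × LW, S) ≃ D(RX × W, RS)` natural in both `X` and `W`, whence `L^* S^X ≅ (RS)^{RX}` and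
`R^* (RS)^W ≅ S^{LW}`; so `L^* ⊣ R^*` restricts to the full subcategories of powers. -/

open CategoryTheory CategoryTheory.Limits

universe u v

variable {C : Type u} [Category.{v} C] [HasFiniteProducts C]


/-- The presheaf `S^X : Y ↦ C(Y × X, S)`. -/
noncomputable def pow (S X : C) : Cᵒᵖ ⥤ Type v where
  obj Z := (Opposite.unop Z ⨯ X) ⟶ S
  map f := TypeCat.ofHom (fun u => prod.map f.unop (𝟙 X) ≫ u)
  map_id Z := by ext u; simp
  map_comp f g := by
    ext u
    show prod.map ((f ≫ g).unop) (𝟙 X) ≫ u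
      = prod.map g.unop (𝟙 X) ≫ prod.map f.unop (𝟙 X) ≫ u
    rw [← Category.assoc, prod.map_map]; simp

/-- Contravariant action `S^f : S^Y ⟶ S^X` for `f : X ⟶ Y`. -/
noncomputable def powMap (S : C) {X Y : C} (f : X ⟶ Y) : pow S Y ⟶ pow S X where
  app Z := TypeCat.ofHom (fun u => prod.map (𝟙 _) f ≫ u)
  naturality Z W g := by
    ext u
    change (Opposite.unop Z ⨯ Y ⟶ S) at u
    show prod.map (𝟙 _) f ≫ prod.map g.unop (𝟙 Y) ≫ u
      = prod.map g.unop (𝟙 X) ≫ prod.map (𝟙 _) f ≫ u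
    rw [← Category.assoc, ← Category.assoc, prod.map_map, prod.map_map]
    simp

@[simp] lemma powMap_id (S X : C) : powMap S (𝟙 X) = 𝟙 (pow S X) := by
  ext Z u; simp [powMap, pow] <;> rfl

@[simp] lemma powMap_comp (S : C) {X Y Z : C} (f : X ⟶ Y) (g : Y ⟶ Z) :
    powMap S (f ≫ g) = powMap S g ≫ powMap S f := by
  ext W u
  change (Opposite.unop W ⨯ Z ⟶ S) at u
  show prod.map (𝟙 _) (f ≫ g) ≫ u = prod.map (𝟙 _) f ≫ prod.map (𝟙 _) g ≫ u
  rw [← Category.assoc, prod.map_map]; simp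

variable {D : Type u} [Category.{v} D] [HasFiniteProducts D]

/-- The canonical Frobenius comparison map `L(R(X) × W) ⟶ X × LW`. -/
noncomputable def frobeniusMap (L : D ⥤ C) (R : C ⥤ D) (adj : L ⊣ R) (W : D) (X : C) :
    L.obj (R.obj X ⨯ W) ⟶ X ⨯ L.obj W :=
  prod.lift (L.map prod.fst ≫ adj.counit.app X) (L.map prod.snd)

/-- The full subcategory of presheaves on `C` of the form `S^X`. -/
def PowSubcat (S : C) : Type _ :=
  ObjectProperty.FullSubcategory (fun F : Cᵒᵖ ⥤ Type v => ∃ X : C, Nonempty (F ≅ pow S X))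

instance (S : C) : Category (PowSubcat S) :=
  ObjectProperty.FullSubcategory.category _

namespace CategoryTheory.Adjunction

variable {A B : Type*} [Category A] [Category B] {F : A ⥤ B} {G : B ⥤ A}
  {P : ObjectProperty A} {Q : ObjectProperty B}

noncomputable def restrictObjectProperty (adj : F ⊣ G) (hF : ∀ X, P X → Q (F.obj X))
    (hG : ∀ Y, Q Y → P (G.obj Y)) :
    Q.lift (P.ι ⋙ F) (fun X => hF _ X.property) ⊣
      P.lift (Q.ι ⋙ G) (fun Y => hG _ Y.property) :=
  adj.restrictFullyFaithful P.fullyFaithfulι Q.fullyFaithfulι (Iso.refl _) (Iso.refl _)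

end CategoryTheory.Adjunction

section Frobenius

variable (L : D ⥤ C) (R : C ⥤ D) (adj : L ⊣ R)

lemma frobeniusMap_naturality_left {X X' : C} (f : X' ⟶ X) (W : D) :
    L.map (prod.map (R.map f) (𝟙 W)) ≫ frobeniusMap L R adj W X
      = frobeniusMap L R adj W X' ≫ prod.map f (𝟙 (L.obj W)) := by
  simp only [frobeniusMap, prod.comp_lift, prod.lift_map, ← L.map_comp_assoc, ← L.map_comp,
    prod.map_fst, prod.map_snd, Category.comp_id]
  rw [L.map_comp_assoc, adj.counit_naturality, Category.assoc]

lemma frobeniusMap_naturality_right {W W' : D} (g : W' ⟶ W) (X : C) :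
    L.map (prod.map (𝟙 (R.obj X)) g) ≫ frobeniusMap L R adj W X
      = frobeniusMap L R adj W' X ≫ prod.map (𝟙 X) (L.map g) := by
  simp only [frobeniusMap, prod.comp_lift, prod.lift_map, ← L.map_comp_assoc, ← L.map_comp,
    prod.map_fst, prod.map_snd, Category.comp_id]

variable (S : C)

noncomputable def frobeniusHomEquiv (W : D) (X : C) [IsIso (frobeniusMap L R adj W X)] :
    (X ⨯ L.obj W ⟶ S) ≃ (R.obj X ⨯ W ⟶ R.obj S) :=
  ((asIso (frobeniusMap L R adj W X)).homCongr (Iso.refl S)).symm.trans (adj.homEquiv _ _)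

lemma frobeniusHomEquiv_apply (W : D) (X : C) [IsIso (frobeniusMap L R adj W X)]
    (u : X ⨯ L.obj W ⟶ S) :
    frobeniusHomEquiv L R adj S W X u = adj.homEquiv _ _ (frobeniusMap L R adj W X ≫ u) := by
  simp [frobeniusHomEquiv]

lemma frobeniusHomEquiv_naturality_left {X X' : C} (f : X' ⟶ X) (W : D)
    [IsIso (frobeniusMap L R adj W X)] [IsIso (frobeniusMap L R adj W X')]
    (u : X ⨯ L.obj W ⟶ S) :
    frobeniusHomEquiv L R adj S W X' (prod.map f (𝟙 _) ≫ u)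
      = prod.map (R.map f) (𝟙 W) ≫ frobeniusHomEquiv L R adj S W X u := by
  rw [frobeniusHomEquiv_apply, frobeniusHomEquiv_apply, ← adj.homEquiv_naturality_left,
    reassoc_of% frobeniusMap_naturality_left]

lemma frobeniusHomEquiv_naturality_right {W W' : D} (g : W' ⟶ W) (X : C)
    [IsIso (frobeniusMap L R adj W X)] [IsIso (frobeniusMap L R adj W' X)]
    (u : X ⨯ L.obj W ⟶ S) :
    frobeniusHomEquiv L R adj S W' X (prod.map (𝟙 X) (L.map g) ≫ u)
      = prod.map (𝟙 _) g ≫ frobeniusHomEquiv L R adj S W X u := by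
  rw [frobeniusHomEquiv_apply, frobeniusHomEquiv_apply, ← adj.homEquiv_naturality_left,
    reassoc_of% frobeniusMap_naturality_right]

end Frobenius

section PowIsos

variable (L : D ⥤ C) (R : C ⥤ D) (adj : L ⊣ R) (S : C)

noncomputable def rOpCompPowIso (W : D) [∀ X, IsIso (frobeniusMap L R adj W X)] :
    R.op ⋙ pow (R.obj S) W ≅ pow S (L.obj W) :=
  (NatIso.ofComponents (fun X => (frobeniusHomEquiv L R adj S W X.unop).toIso) fun f => by
    ext u
    exact frobeniusHomEquiv_naturality_left L R adj S f.unop W u).symm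

noncomputable def lOpCompPowIso (X : C) [∀ W, IsIso (frobeniusMap L R adj W X)] :
    L.op ⋙ pow S X ≅ pow (R.obj S) (R.obj X) :=
  NatIso.ofComponents
    (fun W => ((prod.braiding (L.obj W.unop) X).homFromEquiv.trans
      ((frobeniusHomEquiv L R adj S W.unop X).trans
        (prod.braiding (R.obj X) W.unop).homFromEquiv)).toIso)
    fun {W W'} g => by
      ext (u : L.obj W.unop ⨯ X ⟶ S)
      change (prod.braiding (R.obj X) W'.unop).inv ≫ frobeniusHomEquiv L R adj S W'.unop X
          ((prod.braiding (L.obj W'.unop) X).inv ≫ prod.map (L.map g.unop) (𝟙 X) ≫ u)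
        = prod.map g.unop (𝟙 _) ≫ (prod.braiding (R.obj X) W.unop).inv ≫
          frobeniusHomEquiv L R adj S W.unop X ((prod.braiding (L.obj W.unop) X).inv ≫ u)
      have swap_L : (prod.braiding (L.obj W'.unop) X).inv ≫ prod.map (L.map g.unop) (𝟙 X)
          = prod.map (𝟙 X) (L.map g.unop) ≫ (prod.braiding (L.obj W.unop) X).inv := by
        simp
      have swap_R : (prod.braiding (R.obj X) W'.unop).inv ≫ prod.map (𝟙 _) g.unop
          = prod.map g.unop (𝟙 _) ≫ (prod.braiding (R.obj X) W.unop).inv := by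
        simp
      rw [reassoc_of% swap_L, frobeniusHomEquiv_naturality_right, reassoc_of% swap_R]

end PowIsos

/-- An adjunction `L ⊣ R` between categories with finite products satisfying Frobenius
reciprocity extends contravariantly to an adjunction between the full subcategories of
presheaves of the form `(RS)^W` (on `D`) and of the form `S^X` (on `C`), with
`S^X ↦ (RS)^{RX}` and `(RS)^W ↦ S^{LW}`. -/
theorem frobenius_double_power_adjunction (L : D ⥤ C) (R : C ⥤ D) (adj : L ⊣ R)
    (frob : ∀ (W : D) (X : C), IsIso (frobeniusMap L R adj W X)) (S : C) :
    ∃ (Φ : PowSubcat S ⥤ PowSubcat (R.obj S)) (Ψ : PowSubcat (R.obj S) ⥤ PowSubcat S)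
      (adj2 : Φ ⊣ Ψ),
      (∀ (P : PowSubcat S) (X : C), Nonempty (P.obj ≅ pow S X) →
        Nonempty ((Φ.obj P).obj ≅ pow (R.obj S) (R.obj X))) ∧
      (∀ (Q : PowSubcat (R.obj S)) (W : D), Nonempty (Q.obj ≅ pow (R.obj S) W) →
        Nonempty ((Ψ.obj Q).obj ≅ pow S (L.obj W))) := by
  have precomp_L (F : Cᵒᵖ ⥤ Type v) (X : C) (h : Nonempty (F ≅ pow S X)) :
      Nonempty (L.op ⋙ F ≅ pow (R.obj S) (R.obj X)) :=
    h.map fun i => Functor.isoWhiskerLeft L.op i ≪≫ lOpCompPowIso L R adj S X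
  have precomp_R (G : Dᵒᵖ ⥤ Type v) (W : D) (h : Nonempty (G ≅ pow (R.obj S) W)) :
      Nonempty (R.op ⋙ G ≅ pow S (L.obj W)) :=
    h.map fun i => Functor.isoWhiskerLeft R.op i ≪≫ rOpCompPowIso L R adj S W
  exact ⟨_, _, (Adjunction.whiskerLeft (Type v) adj.op).restrictObjectProperty
      (fun F ⟨X, hX⟩ => ⟨R.obj X, precomp_L F X hX⟩)
      (fun G ⟨W, hW⟩ => ⟨L.obj W, precomp_R G W hW⟩),
    fun P X => precomp_L P.obj X, fun Q W => precomp_R Q.obj W⟩
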